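/- arXiv:1207.5370 — 5 statements merged into one kernel-verified Lean document; each statement's English description precedes it below -/
import Mathlib

section
/- Let R be a ring and M an automorphism-invariant right R-module with injective hull E(M). Suppose E(M) = E₁ ⊕ E₂ is a direct sum decomposition of E(M), and let π₁ : E(M) → E₁ be the projection with kernel E₂. Then M₁ = π₁(M) is an automorphism-invariant right R-module. -/
universe u v w

section Defs

variable (A : Type u) [Ring A]

/-- `N` is an essential submodule of `M`: it meets every nonzero submodule nontrivially. -/
def IsEssentialIn {M : Type v} [AddCommGroup M] [Module A M] (N : Submodule A M) : Prop :=
  ∀ K : Submodule A M, K ≠ ⊥ → N ⊓ K ≠ ⊥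

/-- `i : M →ₗ[A] E` realizes `E` as an injective hull of `M`: `E` is injective and the image
of `M` is an essential submodule of `E`. -/
def IsInjHull (M : Type v) [AddCommGroup M] [Module A M]
    (E : Type v) [AddCommGroup E] [Module A E] (i : M →ₗ[A] E) : Prop :=
  Function.Injective i ∧ Module.Injective A E ∧ IsEssentialIn A (LinearMap.range i)

/-- `M` is automorphism-invariant: for any injective hull `E` of `M`, the image of `M` is
invariant under every automorphism of `E`. -/
def IsAutInv (M : Type v) [AddCommGroup M] [Module A M] : Prop :=
  ∀ (E : Type v) [AddCommGroup E] [Module A E] (i : M →ₗ[A] E),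
    IsInjHull A M E i →
      ∀ σ : E ≃ₗ[A] E, (LinearMap.range i).map (σ : E →ₗ[A] E) ≤ LinearMap.range i

/-- `M` is quasi-injective: every homomorphism from a submodule of `M` into `M` extends to an
endomorphism of `M`. -/
def IsQuasiInj (M : Type v) [AddCommGroup M] [Module A M] : Prop :=
  ∀ (N : Submodule A M) (f : ↥N →ₗ[A] M), ∃ g : M →ₗ[A] M, ∀ n : ↥N, g ↑n = f n

/-- `M` is pseudo-injective: every monomorphism from a submodule of `M` into `M` extends to an
endomorphism of `M`. -/
def IsPseudoInj (M : Type v) [AddCommGroup M] [Module A M] : Prop :=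
  ∀ (N : Submodule A M) (f : ↥N →ₗ[A] M), Function.Injective f →
    ∃ g : M →ₗ[A] M, ∀ n : ↥N, g ↑n = f n

/-- `M` is quasi-projective: every homomorphism `M → M/N` lifts to an endomorphism of `M`. -/
def IsQuasiProj (M : Type v) [AddCommGroup M] [Module A M] : Prop :=
  ∀ (N : Submodule A M) (f : M →ₗ[A] M ⧸ N), ∃ g : M →ₗ[A] M, N.mkQ.comp g = f

/-- `M` is an indecomposable module: nonzero and not an (internal) direct sum of two nonzero
submodules. -/
def IsIndecomposableMod (M : Type v) [AddCommGroup M] [Module A M] : Prop :=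
  Nontrivial M ∧ ∀ N₁ N₂ : Submodule A M, IsCompl N₁ N₂ → N₁ = ⊥ ∨ N₂ = ⊥

/-- `M` is a uniform module: nonzero, and any two nonzero submodules intersect nontrivially. -/
def IsUniformMod (M : Type v) [AddCommGroup M] [Module A M] : Prop :=
  Nontrivial M ∧ ∀ N₁ N₂ : Submodule A M, N₁ ≠ ⊥ → N₂ ≠ ⊥ → N₁ ⊓ N₂ ≠ ⊥

/-- `M` is uniserial: its submodules are linearly ordered by inclusion. -/
def IsUniserialMod (M : Type v) [AddCommGroup M] [Module A M] : Prop :=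
  ∀ N₁ N₂ : Submodule A M, N₁ ≤ N₂ ∨ N₂ ≤ N₁

/-- `M` is a local module: it has a unique maximal submodule containing every proper submodule. -/
def IsLocalMod (M : Type v) [AddCommGroup M] [Module A M] : Prop :=
  ∃ N : Submodule A M, N ≠ ⊤ ∧ ∀ K : Submodule A M, K ≠ ⊤ → K ≤ N

/-- The socle of `M`: the sum of all simple submodules. -/
def SocleOf (M : Type v) [AddCommGroup M] [Module A M] : Submodule A M :=
  sSup {S : Submodule A M | IsSimpleModule A ↥S}

/-- The socle of a submodule `N` of `M`, as a submodule of `M`: the sum of all simple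
submodules of `M` contained in `N`. -/
def SocleIn {M : Type v} [AddCommGroup M] [Module A M] (N : Submodule A M) : Submodule A M :=
  sSup {S : Submodule A M | S ≤ N ∧ IsSimpleModule A ↥S}

/-- `M` is a singular module: every element is annihilated by an essential (right) ideal. -/
def IsSingularMod (M : Type v) [AddCommGroup M] [Module A M] : Prop :=
  ∀ m : M, IsEssentialIn A (LinearMap.ker (LinearMap.toSpanSingleton A M m))

/-- `M` is a cyclic module. -/
def IsCyclicMod (M : Type v) [AddCommGroup M] [Module A M] : Prop :=
  ∃ m : M, Submodule.span A {m} = ⊤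

end Defs

section RingDefs

variable (R : Type u) [Ring R]

/-- `R` is of right automorphism-invariant type: every finitely generated indecomposable
right `R`-module (i.e. left `Rᵐᵒᵖ`-module) is automorphism-invariant. -/
def IsRAIType : Prop :=
  ∀ (M : Type u) [AddCommGroup M] [Module Rᵐᵒᵖ M], Module.Finite Rᵐᵒᵖ M →
    IsIndecomposableMod Rᵐᵒᵖ M → IsAutInv Rᵐᵒᵖ M

/-- `R` is an indecomposable ring: it is nonzero and is not the direct sum of two nonzero
two-sided ideals. -/
def IsIndecRing : Prop :=
  Nontrivial R ∧ ¬ ∃ I J : Ideal R, (∀ x ∈ I, ∀ r : R, x * r ∈ I) ∧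
    (∀ x ∈ J, ∀ r : R, x * r ∈ J) ∧ I ≠ ⊥ ∧ J ≠ ⊥ ∧ IsCompl I J

/-- The right ideal `xR` of `R`. -/
def RtIdeal (x : R) : Submodule Rᵐᵒᵖ R := Submodule.span Rᵐᵒᵖ ({x} : Set R)

/-- The right ideal `xJ(R)` of `R`, where `J(R)` is the Jacobson radical. -/
def RtIdealJ (x : R) : Submodule Rᵐᵒᵖ R :=
  Submodule.span Rᵐᵒᵖ ((fun j => x * j) '' ((Ideal.jacobson (⊥ : Ideal R) : Ideal R) : Set R))

/-- The module `xR / xJ(R)`. -/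
abbrev TopQuot (x : R) :=
  ↥(RtIdeal R x) ⧸ Submodule.comap (RtIdeal R x).subtype (RtIdealJ R x)

end RingDefs

/-- If `M` is an automorphism-invariant right `R`-module sitting as an essential
submodule of its injective hull `E = E₁ ⊕ E₂`, and `π₁` is the projection onto `E₁` with kernel
`E₂`, then `M₁ = π₁(M)` is automorphism-invariant. -/
theorem stmt_0 (R : Type u) [Ring R]
    (E : Type v) [AddCommGroup E] [Module Rᵐᵒᵖ E] (hinjE : Module.Injective Rᵐᵒᵖ E)
    (M : Submodule Rᵐᵒᵖ E) (hess : IsEssentialIn Rᵐᵒᵖ M)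
    (hinv : ∀ σ : E ≃ₗ[Rᵐᵒᵖ] E, M.map (σ : E →ₗ[Rᵐᵒᵖ] E) ≤ M)
    (E₁ E₂ : Submodule Rᵐᵒᵖ E) (hcompl : IsCompl E₁ E₂)
    (π₁ : E →ₗ[Rᵐᵒᵖ] E) (hπE₁ : ∀ x ∈ E₁, π₁ x = x) (hπE₂ : ∀ x ∈ E₂, π₁ x = 0) :
    IsAutInv Rᵐᵒᵖ ↥(M.map π₁) := by
  classical
  -- basic facts about π₁
  have hπmem : ∀ e : E, π₁ e ∈ E₁ := by
    intro e
    have he : e ∈ E₁ ⊔ E₂ := by rw [hcompl.sup_eq_top]; trivial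
    obtain ⟨a, ha, b, hb, rfl⟩ := Submodule.mem_sup.mp he
    have : π₁ (a + b) = a := by rw [map_add, hπE₁ a ha, hπE₂ b hb, add_zero]
    rw [this]; exact ha
  have hπidem : ∀ e : E, π₁ (π₁ e) = π₁ e := fun e => hπE₁ _ (hπmem e)
  have hM₁E₁ : M.map π₁ ≤ E₁ := by
    rintro _ ⟨m, hm, rfl⟩; exact hπmem m
  -- the inclusion of M₁ into E₁
  set incl : ↥(M.map π₁) →ₗ[Rᵐᵒᵖ] ↥E₁ :=
    LinearMap.codRestrict E₁ (M.map π₁).subtype (fun x => hM₁E₁ x.2) with hincl_def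
  have hincl_coe : ∀ x : ↥(M.map π₁), ((incl x : ↥E₁) : E) = (x : E) := fun x => rfl
  have hincl_inj : Function.Injective incl := by
    intro x y hxy
    apply Subtype.ext
    have := congrArg (fun z : ↥E₁ => (z : E)) hxy
    simpa [hincl_coe] using this
  -- E₁ is injective
  have hE₁inj : Module.Injective Rᵐᵒᵖ ↥E₁ := by
    constructor
    intro X Y _ _ _ _ f hf g
    obtain ⟨h, hh⟩ := hinjE.out f hf (E₁.subtype ∘ₗ g)
    refine ⟨LinearMap.codRestrict E₁ (π₁ ∘ₗ h) (fun y => hπmem _), fun x => ?_⟩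
    apply Subtype.ext
    show π₁ (h (f x)) = ((g x : ↥E₁) : E)
    rw [hh x]
    exact hπE₁ _ (g x).2
  -- M₁ is essential in E₁
  have hessE₁ : ∀ K : Submodule Rᵐᵒᵖ ↥E₁, K ≠ ⊥ → LinearMap.range incl ⊓ K ≠ ⊥ := by
    intro K hK
    obtain ⟨k, hkK, hk0⟩ := Submodule.exists_mem_ne_zero_of_ne_bot hK
    have hK' : K.map E₁.subtype ≠ ⊥ := by
      intro h
      apply hk0
      have : (k : E) ∈ K.map E₁.subtype := ⟨k, hkK, rfl⟩
      rw [h, Submodule.mem_bot] at this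
      exact Subtype.ext this
    obtain ⟨x, hx, hx0⟩ := Submodule.exists_mem_ne_zero_of_ne_bot (hess _ hK')
    obtain ⟨hxM, y, hyK, hyx⟩ := hx
    have hxE₁ : x ∈ E₁ := hyx ▸ y.2
    have hxM₁ : x ∈ M.map π₁ := ⟨x, hxM, hπE₁ x hxE₁⟩
    intro hbot
    apply hx0
    have hy : y ∈ LinearMap.range incl ⊓ K := by
      refine ⟨⟨⟨x, hxM₁⟩, ?_⟩, hyK⟩
      apply Subtype.ext; rw [hincl_coe]; exact hyx.symm
    rw [hbot, Submodule.mem_bot] at hy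
    rw [← hyx, hy]; exact map_zero _
  -- restricted projection
  set πr : E →ₗ[Rᵐᵒᵖ] ↥E₁ := LinearMap.codRestrict E₁ π₁ hπmem with hπr_def
  have hπr_coe : ∀ e : E, ((πr e : ↥E₁) : E) = π₁ e := fun e => rfl
  -- M₁ is invariant under automorphisms of E₁
  have hinvE₁ : ∀ τ : ↥E₁ ≃ₗ[Rᵐᵒᵖ] ↥E₁, ∀ x : ↥E₁,
      (x : E) ∈ M.map π₁ → ((τ x : ↥E₁) : E) ∈ M.map π₁ := by
    intro τ x hx
    set s : E →ₗ[Rᵐᵒᵖ] E := E₁.subtype ∘ₗ (τ : ↥E₁ →ₗ[Rᵐᵒᵖ] ↥E₁) ∘ₗ πr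
      + (LinearMap.id - π₁) with hs_def
    set s' : E →ₗ[Rᵐᵒᵖ] E := E₁.subtype ∘ₗ (τ.symm : ↥E₁ →ₗ[Rᵐᵒᵖ] ↥E₁) ∘ₗ πr
      + (LinearMap.id - π₁) with hs'_def
    have hs_apply : ∀ e : E, s e = ((τ (πr e) : ↥E₁) : E) + (e - π₁ e) := fun e => rfl
    have hs'_apply : ∀ e : E, s' e = ((τ.symm (πr e) : ↥E₁) : E) + (e - π₁ e) := fun e => rfl
    have hπs : ∀ e : E, π₁ (s e) = ((τ (πr e) : ↥E₁) : E) := by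
      intro e
      rw [hs_apply, map_add, hπE₁ _ (τ (πr e)).2, map_sub, hπidem, sub_self, add_zero]
    have hπs' : ∀ e : E, π₁ (s' e) = ((τ.symm (πr e) : ↥E₁) : E) := by
      intro e
      rw [hs'_apply, map_add, hπE₁ _ (τ.symm (πr e)).2, map_sub, hπidem, sub_self, add_zero]
    have hπrs : ∀ e : E, πr (s e) = τ (πr e) := by
      intro e; apply Subtype.ext; rw [hπr_coe]; exact hπs e
    have hπrs' : ∀ e : E, πr (s' e) = τ.symm (πr e) := by
      intro e; apply Subtype.ext; rw [hπr_coe]; exact hπs' e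
    have hss' : ∀ e : E, s' (s e) = e := by
      intro e
      rw [hs'_apply, hπrs, LinearEquiv.symm_apply_apply, hπs, hs_apply, hπr_coe]
      abel
    have hs's : ∀ e : E, s (s' e) = e := by
      intro e
      rw [hs_apply, hπrs', LinearEquiv.apply_symm_apply, hπs', hs'_apply, hπr_coe]
      abel
    set σ : E ≃ₗ[Rᵐᵒᵖ] E := LinearEquiv.ofLinear s s'
      (LinearMap.ext hs's) (LinearMap.ext hss') with hσ_def
    obtain ⟨m, hm, hmx⟩ := hx
    have hsm : s m ∈ M := hinv σ ⟨m, hm, rfl⟩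
    refine ⟨s m, hsm, ?_⟩
    rw [hπs, show πr m = x from Subtype.ext hmx]
  -- now prove the main statement
  rintro F _ _ i ⟨hi_inj, hF_inj, hi_ess⟩ σ
  -- extend i along incl to φ : E₁ → F
  obtain ⟨φ, hφ⟩ := hF_inj.out incl hincl_inj i
  have hφ_inj : Function.Injective φ := by
    rw [← LinearMap.ker_eq_bot]
    by_contra h
    obtain ⟨y, ⟨⟨m, rfl⟩, hyker⟩, hy0⟩ :=
      Submodule.exists_mem_ne_zero_of_ne_bot (hessE₁ _ h)
    apply hy0
    have h0 : φ (incl m) = 0 := hyker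
    rw [hφ] at h0
    rw [show m = 0 from hi_inj (by rw [h0, map_zero]), map_zero]
  -- retraction r : F → E₁
  obtain ⟨r, hr⟩ := hE₁inj.out φ hφ_inj LinearMap.id
  have hrφ : ∀ x : ↥E₁, r (φ x) = x := fun x => hr x
  have hker_r : LinearMap.ker r = ⊥ := by
    by_contra h
    obtain ⟨y, ⟨⟨m, rfl⟩, hyker⟩, hy0⟩ :=
      Submodule.exists_mem_ne_zero_of_ne_bot (hi_ess _ h)
    apply hy0
    have h0 : r (i m) = 0 := hyker
    rw [← hφ, hrφ] at h0
    rw [show m = 0 from hincl_inj (by rw [h0, map_zero]), map_zero]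
  have hφr : ∀ f : F, φ (r f) = f := by
    intro f
    have : f - φ (r f) ∈ LinearMap.ker r := by
      rw [LinearMap.mem_ker, map_sub, hrφ, sub_self]
    rw [hker_r, Submodule.mem_bot, sub_eq_zero] at this
    exact this.symm
  -- transfer σ to an automorphism τ of E₁
  set τ : ↥E₁ ≃ₗ[Rᵐᵒᵖ] ↥E₁ := LinearEquiv.ofLinear
    (r ∘ₗ (σ : F →ₗ[Rᵐᵒᵖ] F) ∘ₗ φ) (r ∘ₗ (σ.symm : F →ₗ[Rᵐᵒᵖ] F) ∘ₗ φ)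
    (by
      apply LinearMap.ext; intro x
      show r (σ (φ (r (σ.symm (φ x))))) = x
      rw [hφr, LinearEquiv.apply_symm_apply, hrφ])
    (by
      apply LinearMap.ext; intro x
      show r (σ.symm (φ (r (σ (φ x))))) = x
      rw [hφr, LinearEquiv.symm_apply_apply, hrφ]) with hτ_def
  have hτ_apply : ∀ x : ↥E₁, τ x = r (σ (φ x)) := fun x => rfl
  -- conclude
  rintro _ ⟨_, ⟨m, rfl⟩, rfl⟩
  have hm₁ : ((incl m : ↥E₁) : E) ∈ M.map π₁ := by rw [hincl_coe]; exact m.2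
  have hτm := hinvE₁ τ (incl m) hm₁
  refine ⟨⟨_, hτm⟩, ?_⟩
  show i ⟨((τ (incl m) : ↥E₁) : E), hτm⟩ = σ (i m)
  have hemb : i ⟨((τ (incl m) : ↥E₁) : E), hτm⟩ = φ (τ (incl m)) := by
    rw [← hφ]
    congr 1
  rw [hemb, hτ_apply, hφr, hφ]
end

section
/- Let R be a ring and M an automorphism-invariant right R-module with injective hull E(M). Suppose E(M) = E₁ ⊕ E₂ and there exists an automorphism σ₁ of E₁ such that id_{E₁} − σ₁ is also an automorphism of E₁. Then M = (M ∩ E₁) ⊕ (M ∩ E₂). -/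
/-!
Extend `σ₁` and `ψ := 1 - σ₁` by the identity on `E₂` to automorphisms `α` and `β` of `E`.
If `m ∈ M` has `E₁`-component `m₁`, then `m - α m = ψ m₁ = β m₁`, so `m₁ = β⁻¹ (m - α m)` lies
in `M` by automorphism-invariance, and hence so does the `E₂`-component `m - m₁`.
-/

universe u v w

namespace Submodule

variable {R E : Type*} [Ring R] [AddCommGroup E] [Module R E] {p q : Submodule R E}

noncomputable def extendAutOfIsCompl (h : IsCompl p q) (τ : p ≃ₗ[R] p) : E ≃ₗ[R] E :=
  (prodEquivOfIsCompl p q h).symm ≪≫ₗ τ.prodCongr (LinearEquiv.refl R q) ≪≫ₗ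
    prodEquivOfIsCompl p q h

theorem extendAutOfIsCompl_apply (h : IsCompl p q) (τ : p ≃ₗ[R] p) (x : E) :
    extendAutOfIsCompl h τ x = τ (p.projectionOnto q h x) + q.projection p h.symm x := by
  simp [extendAutOfIsCompl, coe_prodEquivOfIsCompl']

theorem extendAutOfIsCompl_apply_left (h : IsCompl p q) (τ : p ≃ₗ[R] p) (x : p) :
    extendAutOfIsCompl h τ x = τ x := by
  simp [extendAutOfIsCompl_apply]

theorem projection_mem_of_forall_map_le {M : Submodule R E}
    (hM : ∀ σ : E ≃ₗ[R] E, M.map (σ : E →ₗ[R] E) ≤ M) (h : IsCompl p q) (τ : p ≃ₗ[R] p)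
    (hτ : Function.Bijective ⇑((LinearMap.id : p →ₗ[R] p) - τ.toLinearMap)) {x : E}
    (hx : x ∈ M) : p.projection q h x ∈ M := by
  have map_mem (σ : E ≃ₗ[R] E) {y : E} (hy : y ∈ M) : σ y ∈ M := hM σ ⟨y, hy, rfl⟩
  set ψ := LinearEquiv.ofBijective _ hτ
  set x₁ := p.projectionOnto q h x
  have hψ : x - extendAutOfIsCompl h τ x = extendAutOfIsCompl h ψ x₁ := by
    rw [extendAutOfIsCompl_apply_left, extendAutOfIsCompl_apply,
      projection_eq_self_sub_projection h x, projection_apply]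
    simp only [ψ, LinearEquiv.ofBijective_apply, LinearMap.sub_apply, LinearMap.id_apply,
      LinearEquiv.coe_coe, AddSubgroupClass.coe_sub, x₁]
    abel
  have hx₁ : (x₁ : E) = (extendAutOfIsCompl h ψ).symm (x - extendAutOfIsCompl h τ x) := by
    rw [hψ, LinearEquiv.symm_apply_apply]
  rw [projection_apply, hx₁]
  exact map_mem _ (M.sub_mem hx (map_mem _ hx))

theorem eq_inf_sup_inf_of_projection_mem {M : Submodule R E} (h : IsCompl p q)
    (hM : ∀ x ∈ M, p.projection q h x ∈ M) : M = M ⊓ p ⊔ M ⊓ q := by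
  refine le_antisymm (fun x hx => ?_) (sup_le inf_le_left inf_le_left)
  rw [← add_sub_cancel (p.projection q h x) x]
  exact add_mem_sup ⟨hM x hx, projection_apply_mem h x⟩
    ⟨M.sub_mem hx (hM x hx), sub_projection_mem h x⟩

end Submodule

theorem stmt_1_general (R : Type u) [Ring R]
    (E : Type v) [AddCommGroup E] [Module Rᵐᵒᵖ E]
    (M : Submodule Rᵐᵒᵖ E)
    (hinv : ∀ σ : E ≃ₗ[Rᵐᵒᵖ] E, M.map (σ : E →ₗ[Rᵐᵒᵖ] E) ≤ M)
    (E₁ E₂ : Submodule Rᵐᵒᵖ E) (hcompl : IsCompl E₁ E₂)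
    (σ₁ : ↥E₁ ≃ₗ[Rᵐᵒᵖ] ↥E₁)
    (hσ₁ : Function.Bijective ⇑((LinearMap.id : ↥E₁ →ₗ[Rᵐᵒᵖ] ↥E₁) - σ₁.toLinearMap)) :
    Disjoint (M ⊓ E₁) (M ⊓ E₂) ∧ M = (M ⊓ E₁) ⊔ (M ⊓ E₂) :=
  ⟨hcompl.disjoint.mono inf_le_right inf_le_right,
    Submodule.eq_inf_sup_inf_of_projection_mem hcompl fun _ hx =>
      Submodule.projection_mem_of_forall_map_le hinv hcompl σ₁ hσ₁ hx⟩

/-- If `M` is an automorphism-invariant right `R`-module, essential in its injective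
hull `E = E₁ ⊕ E₂`, and `E₁` admits an automorphism `σ₁` with `id - σ₁` also an automorphism,
then `M = (M ∩ E₁) ⊕ (M ∩ E₂)`. -/
theorem stmt_1 (R : Type u) [Ring R]
    (E : Type v) [AddCommGroup E] [Module Rᵐᵒᵖ E] (hinjE : Module.Injective Rᵐᵒᵖ E)
    (M : Submodule Rᵐᵒᵖ E) (hess : IsEssentialIn Rᵐᵒᵖ M)
    (hinv : ∀ σ : E ≃ₗ[Rᵐᵒᵖ] E, M.map (σ : E →ₗ[Rᵐᵒᵖ] E) ≤ M)
    (E₁ E₂ : Submodule Rᵐᵒᵖ E) (hcompl : IsCompl E₁ E₂)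
    (σ₁ : ↥E₁ ≃ₗ[Rᵐᵒᵖ] ↥E₁)
    (hσ₁ : Function.Bijective ⇑((LinearMap.id : ↥E₁ →ₗ[Rᵐᵒᵖ] ↥E₁) - σ₁.toLinearMap)) :
    Disjoint (M ⊓ E₁) (M ⊓ E₂) ∧ M = (M ⊓ E₁) ⊔ (M ⊓ E₂) :=
  stmt_1_general R E M hinv E₁ E₂ hcompl σ₁ hσ₁
end

section
/- Let R be a ring and M an automorphism-invariant right R-module with injective hull E(M). If E(M) = E₁ ⊕ E₂ ⊕ E₃ with E₁ ≅ E₂ as R-modules, then M = (M ∩ E₁) ⊕ (M ∩ E₂) ⊕ (M ∩ E₃). -/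
universe u v w

/-!
For a nilpotent endomorphism `n` of `E`, `1 + n` is an automorphism, so an automorphism-invariant
`M` is invariant under `n`. Transporting along `E₁ ≅ E₂` gives square-zero maps
`E → E₁ ≅ E₂ ⊆ E` and `E → E₂ ≅ E₁ ⊆ E` whose composites are the projections onto `E₁` and `E₂`;
hence these projections preserve `M`, and then so does the remaining projection onto `E₃`.
-/

namespace Submodule

variable {R M : Type*} [Ring R] [AddCommGroup M] [Module R M]

theorem apply_mem_of_isNilpotent {N : Submodule R M}
    (hN : ∀ σ : M ≃ₗ[R] M, N.map (σ : M →ₗ[R] M) ≤ N) {f : Module.End R M} (hf : IsNilpotent f)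
    {x : M} (hx : x ∈ N) : f x ∈ N := by
  let σ := LinearMap.GeneralLinearGroup.toLinearEquiv hf.isUnit_one_add.unit
  have hσx : σ x ∈ N := hN σ ⟨x, hx, rfl⟩
  simpa [σ] using N.sub_mem hσx hx

/-- The projection onto `p` factors as `g ∘ f` with `f : M → p ≅ q ⊆ M` and
`g : M → q ≅ p ⊆ M`, and both are of square zero because `q ≤ p'` and `p ≤ q'`. -/
theorem projection_apply_mem_of_linearEquiv {N p p' q q' : Submodule R M}
    (hN : ∀ σ : M ≃ₗ[R] M, N.map (σ : M →ₗ[R] M) ≤ N)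
    (hp : IsCompl p p') (hq : IsCompl q q') (hqp : q ≤ p') (hpq : p ≤ q') (φ : p ≃ₗ[R] q)
    {x : M} (hx : x ∈ N) : p.projection p' hp x ∈ N := by
  let f : Module.End R M := q.subtype ∘ₗ φ.toLinearMap ∘ₗ p.projectionOnto p' hp
  let g : Module.End R M := p.subtype ∘ₗ φ.symm.toLinearMap ∘ₗ q.projectionOnto q' hq
  have hf : IsNilpotent f := ⟨2, by
    ext y; simp [f, pow_two, projectionOnto_apply_of_mem_right hp (hqp (φ _).2)]⟩
  have hg : IsNilpotent g := ⟨2, by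
    ext y; simp [g, pow_two, projectionOnto_apply_of_mem_right hq (hpq (φ.symm _).2)]⟩
  have hgf : g (f x) = p.projection p' hp x := by
    simp only [f, g, LinearMap.comp_apply, projectionOnto_apply_left, LinearEquiv.coe_coe,
      LinearEquiv.symm_apply_apply, subtype_apply]
    rfl
  exact hgf ▸ N.apply_mem_of_isNilpotent hN hg (N.apply_mem_of_isNilpotent hN hf hx)

theorem eq_sup_inf_of_projection_mem {N E₁ E₂ E₃ : Submodule R M}
    (h₁ : IsCompl E₁ (E₂ ⊔ E₃)) (h₂ : IsCompl E₂ (E₁ ⊔ E₃))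
    (hN₁ : ∀ x ∈ N, E₁.projection _ h₁ x ∈ N) (hN₂ : ∀ x ∈ N, E₂.projection _ h₂ x ∈ N) :
    N = N ⊓ E₁ ⊔ N ⊓ E₂ ⊔ N ⊓ E₃ := by
  refine le_antisymm (fun x hx => ?_) (sup_le (sup_le inf_le_left inf_le_left) inf_le_left)
  set x₁ := E₁.projection _ h₁ x
  set x₂ := E₂.projection _ h₂ x
  have h₁₃ : x - x₂ - x₁ ∈ E₁ ⊔ E₃ :=
    sub_mem (sub_projection_mem h₂ x) (le_sup_left (a := E₁) (projection_apply_mem h₁ x))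
  have h₂₃ : x - x₂ - x₁ ∈ E₂ ⊔ E₃ := by
    rw [sub_right_comm]
    exact sub_mem (sub_projection_mem h₁ x) (le_sup_left (a := E₂) (projection_apply_mem h₂ x))
  have hE₃ : (E₂ ⊔ E₃) ⊓ (E₁ ⊔ E₃) = E₃ := by
    rw [sup_comm, sup_inf_assoc_of_le _ le_sup_right, h₂.disjoint.eq_bot, sup_bot_eq]
  have hx₃ : x - x₂ - x₁ ∈ N ⊓ E₃ :=
    ⟨sub_mem (sub_mem hx (hN₂ x hx)) (hN₁ x hx), hE₃ ▸ ⟨h₂₃, h₁₃⟩⟩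
  have hx_eq : x = x₁ + x₂ + (x - x₂ - x₁) := by abel
  rw [hx_eq]
  exact add_mem_sup (add_mem_sup ⟨hN₁ x hx, projection_apply_mem h₁ x⟩
    ⟨hN₂ x hx, projection_apply_mem h₂ x⟩) hx₃

end Submodule

theorem stmt_5_general (R : Type u) [Ring R]
    (E : Type v) [AddCommGroup E] [Module Rᵐᵒᵖ E]
    (M : Submodule Rᵐᵒᵖ E)
    (hinv : ∀ σ : E ≃ₗ[Rᵐᵒᵖ] E, M.map (σ : E →ₗ[Rᵐᵒᵖ] E) ≤ M)
    (E₁ E₂ E₃ : Submodule Rᵐᵒᵖ E)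
    (h1 : Disjoint E₁ (E₂ ⊔ E₃)) (h2 : Disjoint E₂ (E₁ ⊔ E₃))
    (hsum : E₁ ⊔ E₂ ⊔ E₃ = ⊤) (hiso : Nonempty (↥E₁ ≃ₗ[Rᵐᵒᵖ] ↥E₂)) :
    M = (M ⊓ E₁) ⊔ (M ⊓ E₂) ⊔ (M ⊓ E₃) := by
  obtain ⟨φ⟩ := hiso
  have hc₁ : IsCompl E₁ (E₂ ⊔ E₃) := ⟨h1, codisjoint_iff.2 (by rwa [← sup_assoc])⟩
  have hc₂ : IsCompl E₂ (E₁ ⊔ E₃) :=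
    ⟨h2, codisjoint_iff.2 (by rwa [← sup_assoc, sup_comm E₂])⟩
  exact M.eq_sup_inf_of_projection_mem hc₁ hc₂
    (fun _ => M.projection_apply_mem_of_linearEquiv hinv hc₁ hc₂ le_sup_left le_sup_left φ)
    (fun _ => M.projection_apply_mem_of_linearEquiv hinv hc₂ hc₁ le_sup_left le_sup_left φ.symm)

/-- If `M` is automorphism-invariant, essential in its injective hull
`E = E₁ ⊕ E₂ ⊕ E₃` with `E₁ ≅ E₂`, then `M = (M ∩ E₁) ⊕ (M ∩ E₂) ⊕ (M ∩ E₃)`. -/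
theorem stmt_5 (R : Type u) [Ring R]
    (E : Type v) [AddCommGroup E] [Module Rᵐᵒᵖ E] (hinjE : Module.Injective Rᵐᵒᵖ E)
    (M : Submodule Rᵐᵒᵖ E) (hess : IsEssentialIn Rᵐᵒᵖ M)
    (hinv : ∀ σ : E ≃ₗ[Rᵐᵒᵖ] E, M.map (σ : E →ₗ[Rᵐᵒᵖ] E) ≤ M)
    (E₁ E₂ E₃ : Submodule Rᵐᵒᵖ E)
    (h1 : Disjoint E₁ (E₂ ⊔ E₃)) (h2 : Disjoint E₂ (E₁ ⊔ E₃)) (h3 : Disjoint E₃ (E₁ ⊔ E₂))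
    (hsum : E₁ ⊔ E₂ ⊔ E₃ = ⊤) (hiso : Nonempty (↥E₁ ≃ₗ[Rᵐᵒᵖ] ↥E₂)) :
    M = (M ⊓ E₁) ⊔ (M ⊓ E₂) ⊔ (M ⊓ E₃) :=
  stmt_5_general R E M hinv E₁ E₂ E₃ h1 h2 hsum hiso
end

section
/- Let R be a right artinian ring such that every finitely generated indecomposable right R-module is automorphism-invariant (i.e. R is of RAI-type). Let e ∈ R be an indecomposable idempotent such that eR is not uniform, and let A be a right ideal of R contained in Soc(eR). Then Soc(eR) = A ⊕ A′ where A′ has no simple submodule isomorphic to a simple submodule of A, and the right R-module eR/A′ is quasi-projective. -/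
universe u v w

/-!
`eR` is finitely generated and indecomposable, hence automorphism-invariant, and this forces it
to be square-free. Indeed, if `X ≅ Y` are disjoint nonzero submodules of an automorphism-invariant
module `M`, their injective hulls can be taken as disjoint isomorphic submodules `H₁ ≅ H₂` of
`E(M)`, and the projection of `E(M)` onto `H₁` along a complement containing `H₂` is a product
`τ' τ` of square-zero endomorphisms. Each `1 + τ` is an automorphism, so the projection preserves
`M` and splits it nontrivially.

In the square-free module `eR`, isomorphic simple submodules coincide. Hence the simple
submodules of `eR` not contained in `A` span a complement `A'` of `A` in `Soc(eR)`, no simple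
submodule of `A'` is isomorphic to one of `A`, and `A'` is fully invariant in `eR`. As `eR` is
projective, `eR/A'` is quasi-projective.
-/

namespace Submodule

variable {R : Type*} [Ring R] {M : Type*} [AddCommGroup M] [Module R M]

def IsEssentialExt (N H : Submodule R M) : Prop :=
  N ≤ H ∧ ∀ L ≤ H, Disjoint N L → L = ⊥

theorem IsEssentialExt.refl (N : Submodule R M) : IsEssentialExt N N :=
  ⟨le_rfl, fun _ hL hNL => hNL.eq_bot_of_ge hL⟩

theorem exists_maximal_isEssentialExt (N : Submodule R M) :
    ∃ H, IsEssentialExt N H ∧ ∀ K, IsEssentialExt N K → H ≤ K → K = H := by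
  obtain ⟨H, -, hmax⟩ := zorn_le_nonempty₀ {H | IsEssentialExt N H} (fun c hc hchain H₀ hH₀ => by
    refine ⟨sSup c, ⟨(hc hH₀).1.trans (le_sSup hH₀), fun L hL hNL => ?_⟩, fun _ => le_sSup⟩
    rw [eq_bot_iff]
    intro x hx
    obtain ⟨K, hKc, hxK⟩ := (mem_sSup_of_directed ⟨H₀, hH₀⟩ hchain.directedOn).1 (hL hx)
    have := (hc hKc).2 (span R {x}) ((span_singleton_le_iff_mem x K).2 hxK)
      (hNL.mono_right ((span_singleton_le_iff_mem x L).2 hx))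
    simpa using this) N (IsEssentialExt.refl N)
  exact ⟨H, hmax.prop, fun K hK hHK => hmax.eq_of_ge hK hHK⟩

theorem exists_maximal_disjoint (H : Submodule R M) :
    ∃ C, Disjoint H C ∧ ∀ D, Disjoint H D → C ≤ D → D = C := by
  obtain ⟨C, -, hmax⟩ := zorn_le_nonempty₀ {C | Disjoint H C} (fun c hc hchain C₀ hC₀ => by
    refine ⟨sSup c, ?_, fun _ => le_sSup⟩
    rw [Set.mem_ofPred_eq, disjoint_iff, eq_bot_iff]
    rintro x ⟨hxH, hxc⟩
    obtain ⟨D, hDc, hxD⟩ := (mem_sSup_of_directed ⟨C₀, hC₀⟩ hchain.directedOn).1 hxc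
    exact (disjoint_iff.1 (hc hDc)).le ⟨hxH, hxD⟩) ⊥ disjoint_bot_right
  exact ⟨C, hmax.prop, fun D hD hCD => hmax.eq_of_ge hD hCD⟩

variable {M' : Type*} [AddCommGroup M'] [Module R M']

theorem IsEssentialExt.map {N H : Submodule R M} (h : N.IsEssentialExt H) (f : M →ₗ[R] M')
    (hf : Disjoint H (LinearMap.ker f)) : (N.map f).IsEssentialExt (H.map f) := by
  refine ⟨map_mono h.1, fun L hL hNL => eq_bot_iff.2 fun y hy => ?_⟩
  obtain ⟨x, hxH, rfl⟩ := hL hy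
  have hx : H ⊓ L.comap f = ⊥ := h.2 _ inf_le_left <| disjoint_iff.2 <| eq_bot_iff.2
    fun z ⟨hzN, hzH, hzL⟩ => (disjoint_iff.1 hf).le
      ⟨hzH, (disjoint_iff.1 hNL).le ⟨mem_map_of_mem hzN, hzL⟩⟩
  rw [(eq_bot_iff.1 hx) ⟨hxH, hy⟩, map_zero]
  exact zero_mem _

theorem IsEssentialExt.disjoint {X H₁ Y H₂ : Submodule R M} (h₁ : X.IsEssentialExt H₁)
    (h₂ : Y.IsEssentialExt H₂) (hXY : Disjoint X Y) : Disjoint H₁ H₂ := by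
  have hX : X ⊓ H₂ = ⊥ := h₂.2 _ inf_le_right (hXY.symm.mono_right inf_le_left)
  exact disjoint_iff.2 <| h₁.2 _ inf_le_left <| disjoint_iff.2 <| eq_bot_iff.2 <|
    hX ▸ inf_le_inf_left X inf_le_right

end Submodule

namespace Module.Injective

variable {R : Type*} [Ring R] {E F : Type v} [AddCommGroup E] [Module R E]
  [AddCommGroup F] [Module R F]

theorem of_retract [Module.Injective R E] (i : F →ₗ[R] E) (r : E →ₗ[R] F)
    (hri : r ∘ₗ i = LinearMap.id) : Module.Injective R F where
  out _ _ _ _ _ _ f hf g := by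
    obtain ⟨h, hh⟩ := Module.Injective.out f hf (i ∘ₗ g)
    exact ⟨r ∘ₗ h, fun x => by simp [hh, ← LinearMap.comp_apply r i, hri]⟩

theorem of_linearEquiv [Module.Injective R E] (e : E ≃ₗ[R] F) : Module.Injective R F :=
  of_retract e.symm.toLinearMap e.toLinearMap (by ext; simp)

theorem of_isProj [Module.Injective R E] {H : Submodule R E} {p : E →ₗ[R] E}
    (hp : LinearMap.IsProj H p) : Module.Injective R H :=
  of_retract H.subtype hp.codRestrict (by ext; simp)

theorem exists_extension_of_disjoint {Q : Type v} [AddCommGroup Q] [Module R Q]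
    [Module.Injective R Q] {H C : Submodule R E} (hHC : Disjoint H C) (g : H →ₗ[R] Q) :
    ∃ π : E →ₗ[R] Q, (∀ x : H, π x = g x) ∧ ∀ x ∈ C, π x = 0 := by
  have hinj : Function.Injective (H.subtype.coprod C.subtype) := by
    rw [← LinearMap.ker_eq_bot, LinearMap.ker_coprod_of_disjoint_range _ _
      (by simpa using hHC), Submodule.ker_subtype, Submodule.ker_subtype, Submodule.prod_bot]
  obtain ⟨π, hπ⟩ := Module.Injective.out _ hinj (g ∘ₗ LinearMap.fst R H C)
  exact ⟨π, fun x => by simpa using hπ (x, 0), fun x hx => by simpa using hπ (0, ⟨x, hx⟩)⟩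

variable [Module.Injective R E]

/-- Inside an injective module, a maximal essential extension of `N` is a direct summand. -/
theorem exists_isProj_isEssentialExt (N : Submodule R E) :
    ∃ (H : Submodule R E) (p : E →ₗ[R] E), N.IsEssentialExt H ∧ LinearMap.IsProj H p := by
  obtain ⟨H, hNH, hHmax⟩ := N.exists_maximal_isEssentialExt
  obtain ⟨C, hHC, hCmax⟩ := H.exists_maximal_disjoint
  obtain ⟨p, hpH, hpC⟩ := exists_extension_of_disjoint hHC H.subtype
  have hpH' : ∀ x ∈ H, p x = x := fun x hx => hpH ⟨x, hx⟩
  -- `C` is also a maximal submodule disjoint from `N`, since `N` is essential in `H`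
  have hCmax' : ∀ D, Disjoint N D → C ≤ D → D = C := fun D hND hCD =>
    hCmax D (disjoint_iff.2 (hNH.2 _ inf_le_left (hND.mono_right inf_le_right))) hCD
  have hrange : N.IsEssentialExt (LinearMap.range p) := by
    refine ⟨fun x hx => ⟨x, hpH' x (hNH.1 hx)⟩, fun L hL hNL => ?_⟩
    have hD : L.comap p = C := hCmax' _ (disjoint_iff.2 <| eq_bot_iff.2 fun x ⟨hxN, hxL⟩ =>
      (disjoint_iff.1 hNL).le ⟨hxN, by simpa [hpH' x (hNH.1 hxN)] using hxL⟩)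
      fun x hx => by simp [Submodule.mem_comap, hpC x hx]
    rw [← inf_eq_right.2 hL, ← Submodule.map_comap_eq, hD, eq_bot_iff]
    rintro _ ⟨x, hx, rfl⟩
    simp [hpC x hx]
  have hHp : LinearMap.range p = H := hHmax _ hrange fun x hx => ⟨x, hpH' x hx⟩
  exact ⟨H, p, hNH, ⟨fun x => hHp ▸ LinearMap.mem_range_self p x, hpH'⟩⟩

theorem exists_disjoint_linearEquiv {X Y : Submodule R E} (hXY : Disjoint X Y)
    (e : X ≃ₗ[R] Y) :
    ∃ H₁ H₂ : Submodule R E, X ≤ H₁ ∧ Y ≤ H₂ ∧ Disjoint H₁ H₂ ∧ Module.Injective R H₁ ∧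
      Module.Injective R H₂ ∧ Nonempty (H₁ ≃ₗ[R] H₂) := by
  obtain ⟨H₁, p, hXH₁, hp⟩ := exists_isProj_isEssentialExt X
  have := of_isProj hp
  -- `H₂` is the image of `H₁` under an extension `v` of `e`, injective on `H₁` since `X` is
  -- essential in `H₁`
  obtain ⟨v, hv⟩ := Module.Injective.out X.subtype X.injective_subtype (Y.subtype ∘ₗ e.toLinearMap)
  have hv' : ∀ x : X, v x = e x := hv
  have hXv : X.map v = Y := by
    ext y
    refine ⟨?_, fun hy => ⟨_, (e.symm ⟨y, hy⟩).2, by simp [hv']⟩⟩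
    rintro ⟨x, hx, rfl⟩
    exact hv' ⟨x, hx⟩ ▸ (e ⟨x, hx⟩).2
  have hker : Disjoint H₁ (LinearMap.ker v) := disjoint_iff.2 <| hXH₁.2 _ inf_le_left <|
    disjoint_iff.2 <| eq_bot_iff.2 fun x ⟨hxX, _, hxv⟩ =>
      (Submodule.mem_bot R).2 (by simpa [LinearMap.mem_ker.1 hxv] using (hv' ⟨x, hxX⟩).symm)
  have hinj : Function.Injective (v ∘ₗ H₁.subtype) := by
    rw [← LinearMap.ker_eq_bot, eq_bot_iff]
    intro x hx
    exact (Submodule.mem_bot R).2 (Subtype.ext ((disjoint_iff.1 hker).le ⟨x.2, hx⟩))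
  have hrange : LinearMap.range (v ∘ₗ H₁.subtype) = H₁.map v := by
    rw [LinearMap.range_comp, Submodule.range_subtype]
  let u : H₁ ≃ₗ[R] H₁.map v := (LinearEquiv.ofInjective _ hinj).trans (.ofEq _ _ hrange)
  have hYH₂ : Y.IsEssentialExt (H₁.map v) := hXv ▸ hXH₁.map v hker
  exact ⟨H₁, H₁.map v, hXH₁.1, hYH₂.1, hXH₁.disjoint hYH₂ hXY, this, of_linearEquiv u, ⟨u⟩⟩

end Module.Injective

namespace Submodule

variable {R : Type*} [Ring R] {E : Type v} [AddCommGroup E] [Module R E] {N : Submodule R E}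

theorem map_le_of_mul_self_eq_zero (hN : ∀ σ : E ≃ₗ[R] E, N.map (σ : E →ₗ[R] E) ≤ N)
    {τ : Module.End R E} (hτ : τ * τ = 0) : N.map τ ≤ N := by
  let σ : E ≃ₗ[R] E := .ofLinearMap (1 + τ) (1 - τ)
    (by rw [← Module.End.mul_eq_comp, ← Module.End.one_eq_id]; noncomm_ring; simp [hτ])
    (by rw [← Module.End.mul_eq_comp, ← Module.End.one_eq_id]; noncomm_ring; simp [hτ])
  rintro _ ⟨x, hx, rfl⟩
  have : τ x = σ x - x := by simp [σ]
  exact this ▸ sub_mem (hN σ ⟨x, hx, rfl⟩) hx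

theorem exists_isProj_map_le (hN : ∀ σ : E ≃ₗ[R] E, N.map (σ : E →ₗ[R] E) ≤ N)
    {H₁ H₂ : Submodule R E} [Module.Injective R H₁] [Module.Injective R H₂]
    (hH : Disjoint H₁ H₂) (u : H₁ ≃ₗ[R] H₂) :
    ∃ p : E →ₗ[R] E, LinearMap.IsProj H₁ p ∧ H₂ ≤ LinearMap.ker p ∧ N.map p ≤ N := by
  obtain ⟨π₁, hπ₁₁, hπ₁₂⟩ := Module.Injective.exists_extension_of_disjoint hH LinearMap.id
  obtain ⟨π₂, hπ₂₂, hπ₂₁⟩ := Module.Injective.exists_extension_of_disjoint hH.symm LinearMap.id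
  let τ : Module.End R E := H₂.subtype ∘ₗ u.toLinearMap ∘ₗ π₁
  let τ' : Module.End R E := H₁.subtype ∘ₗ u.symm.toLinearMap ∘ₗ π₂
  have hτ : τ * τ = 0 := by ext x; simp [τ, hπ₁₂]
  have hτ' : τ' * τ' = 0 := by ext x; simp [τ', hπ₂₁]
  have hτ'τ : ∀ x, (τ' * τ) x = π₁ x := fun x => by simp [τ, τ', hπ₂₂]
  refine ⟨τ' * τ, ⟨fun x => hτ'τ x ▸ (π₁ x).2, fun x hx => ?_⟩,
    fun x hx => by simp [hτ'τ, hπ₁₂ x hx], ?_⟩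
  · simpa [hτ'τ] using congrArg Subtype.val (hπ₁₁ ⟨x, hx⟩)
  rw [Module.End.mul_eq_comp, map_comp]
  exact (map_mono (map_le_of_mul_self_eq_zero hN hτ)).trans (map_le_of_mul_self_eq_zero hN hτ')

variable {M : Type*} [AddCommGroup M] [Module R M]

theorem isCompl_comap_of_isProj {i : M →ₗ[R] E} (hi : Function.Injective i) {H : Submodule R E}
    {p : E →ₗ[R] E} (hp : LinearMap.IsProj H p)
    (hpi : (LinearMap.range i).map p ≤ LinearMap.range i) :
    IsCompl (H.comap i) ((LinearMap.ker p).comap i) := by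
  refine ⟨?_, codisjoint_iff.2 <| eq_top_iff.2 fun x _ => ?_⟩
  · rw [disjoint_iff, ← comap_inf, disjoint_iff.1 hp.isCompl.disjoint, comap_bot,
      LinearMap.ker_eq_bot.2 hi]
  obtain ⟨y, hy⟩ := hpi ⟨i x, ⟨x, rfl⟩, rfl⟩
  refine mem_sup.2 ⟨y, ?_, x - y, ?_, add_sub_cancel y x⟩
  · simpa [hy] using hp.map_mem (i x)
  · simp [hy, hp.map_id _ (hp.map_mem _)]

end Submodule

/-- No submodule of the form `X ⊕ X` with `X ≠ 0`. -/
def IsSquareFree (R : Type*) [Ring R] (M : Type*) [AddCommGroup M] [Module R M] : Prop :=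
  ∀ X Y : Submodule R M, Disjoint X Y → Nonempty (X ≃ₗ[R] Y) → X = ⊥

section AutInv

open CategoryTheory

variable {R : Type u} [Ring R] {M : Type v} [AddCommGroup M] [Module R M] [Small.{v} R]

variable (R M) in
theorem exists_isInjHull :
    ∃ (E : Type v) (_ : AddCommGroup E) (_ : Module R E) (i : M →ₗ[R] E), IsInjHull R M E i := by
  let Q : ModuleCat.{v} R := Injective.under (ModuleCat.of R M)
  let j : M →ₗ[R] Q := (Injective.ι (ModuleCat.of R M)).hom
  have hj : Function.Injective j := (ModuleCat.mono_iff_injective _).1 inferInstance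
  have : Module.Injective R Q :=
    Module.injective_module_of_injective_object R Q (inj := Injective.injective_under _)
  obtain ⟨H, p, hH, hp⟩ := Module.Injective.exists_isProj_isEssentialExt (LinearMap.range j)
  let i : M →ₗ[R] H := j.codRestrict H fun m => hH.1 ⟨m, rfl⟩
  refine ⟨H, _, _, i, fun a b hab => hj (congrArg Subtype.val hab),
    Module.Injective.of_isProj hp, fun K hK hdisj => hK ?_⟩
  refine Submodule.map_injective_of_injective H.injective_subtype ?_
  rw [Submodule.map_bot]
  refine hH.2 _ (Submodule.map_subtype_le H K) (disjoint_iff.2 <| eq_bot_iff.2 ?_)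
  rintro _ ⟨⟨m, rfl⟩, k, hk, hkm⟩
  have hkm' : i m = k := Subtype.ext hkm.symm
  have : i m ∈ LinearMap.range i ⊓ K := ⟨⟨m, rfl⟩, hkm' ▸ hk⟩
  rw [hdisj, Submodule.mem_bot] at this
  simpa [i] using congrArg Subtype.val this

theorem IsAutInv.exists_isCompl (hM : IsAutInv R M) {X Y : Submodule R M}
    (hX : X ≠ ⊥) (hY : Y ≠ ⊥) (hXY : Disjoint X Y) (e : X ≃ₗ[R] Y) :
    ∃ N₁ N₂ : Submodule R M, IsCompl N₁ N₂ ∧ N₁ ≠ ⊥ ∧ N₂ ≠ ⊥ := by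
  obtain ⟨E, _, _, i, hull⟩ := exists_isInjHull R M
  have : Module.Injective R E := hull.2.1
  have hXY' : Disjoint (X.map i) (Y.map i) := by
    rw [disjoint_iff, ← Submodule.map_inf i hull.1, disjoint_iff.1 hXY, Submodule.map_bot]
  let e' : X.map i ≃ₗ[R] Y.map i :=
    (X.equivMapOfInjective i hull.1).symm.trans (e.trans (Y.equivMapOfInjective i hull.1))
  obtain ⟨H₁, H₂, hXH₁, hYH₂, hH, _, _, ⟨u⟩⟩ :=
    Module.Injective.exists_disjoint_linearEquiv hXY' e'
  obtain ⟨p, hp, hH₂p, hpM⟩ := Submodule.exists_isProj_map_le (hM E i hull) hH u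
  refine ⟨H₁.comap i, (LinearMap.ker p).comap i,
    Submodule.isCompl_comap_of_isProj hull.1 hp hpM, ?_, ?_⟩
  · exact ne_bot_of_le_ne_bot hX (Submodule.map_le_iff_le_comap.1 hXH₁)
  · exact ne_bot_of_le_ne_bot hY (Submodule.map_le_iff_le_comap.1 (hYH₂.trans hH₂p))

theorem IsAutInv.isSquareFree (hM : IsAutInv R M) (hind : IsIndecomposableMod R M) :
    IsSquareFree R M := by
  rintro X Y hXY ⟨e⟩
  by_contra hX
  have hY : Y ≠ ⊥ := fun hY => hX <| Submodule.subsingleton_iff_eq_bot.1 <|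
    e.toEquiv.subsingleton_congr.2 (Submodule.subsingleton_iff_eq_bot.2 hY)
  obtain ⟨N₁, N₂, hc, h₁, h₂⟩ := hM.exists_isCompl hX hY hXY e
  exact (hind.2 N₁ N₂ hc).elim h₁ h₂

end AutInv

section Socle

variable {R : Type*} [Ring R] {M : Type*} [AddCommGroup M] [Module R M]
  {P A S T : Submodule R M}

open Submodule

theorem IsSquareFree.eq_bot_of_le (hP : IsSquareFree R P) (hS : S ≤ P) (hT : T ≤ P)
    (hST : Disjoint S T) (e : S ≃ₗ[R] T) : S = ⊥ := by
  have := hP (S.comap P.subtype) (T.comap P.subtype)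
    (by rw [disjoint_iff, ← comap_inf, disjoint_iff.1 hST, comap_bot, ker_subtype])
    ⟨(comapSubtypeEquivOfLe hS).trans (e.trans (comapSubtypeEquivOfLe hT).symm)⟩
  rw [← inf_eq_right.2 hS, ← map_comap_subtype, this, Submodule.map_bot]

theorem IsSquareFree.not_le_of_linearEquiv (hP : IsSquareFree R P) (hS : S ≤ P) (hT : T ≤ P)
    [IsSimpleModule R S] (hSA : ¬ S ≤ A) (e : S ≃ₗ[R] T) : ¬ T ≤ A := fun hTA =>
  have hSatom := isSimpleModule_iff_isAtom.1 ‹_›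
  hSatom.ne_bot <| hP.eq_bot_of_le hS hT ((hSatom.not_le_iff_disjoint.1 hSA).mono_right hTA) e

theorem isSemisimpleModule_socleIn (P : Submodule R M) : IsSemisimpleModule R (SocleIn R P) := by
  rw [SocleIn, sSup_eq_iSup]
  exact isSemisimpleModule_biSup_of_isSemisimpleModule_submodule fun S hS =>
    have := hS.2; inferInstance

theorem socleIn_le (P : Submodule R M) : SocleIn R P ≤ P :=
  sSup_le fun _ h => h.1

variable (P A) in
/-- When `P` is square-free, this is the complement of `A` in the socle of `P`. -/
def socleCompl : Submodule R M :=
  sSup {S | S ≤ P ∧ IsSimpleModule R S ∧ ¬ S ≤ A}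

theorem socleCompl_le_socleIn : socleCompl P A ≤ SocleIn R P :=
  sSup_le_sSup fun _ hS => ⟨hS.1, hS.2.1⟩

theorem sup_socleCompl (hA : A ≤ SocleIn R P) : A ⊔ socleCompl P A = SocleIn R P :=
  le_antisymm (sup_le hA socleCompl_le_socleIn) <| sSup_le fun S ⟨hSP, hS⟩ => by
    by_cases hSA : S ≤ A
    · exact le_sup_of_le_left hSA
    · exact le_sup_of_le_right (le_sSup ⟨hSP, hS, hSA⟩)

theorem disjoint_socleCompl (hP : IsSquareFree R P) (hA : A ≤ SocleIn R P) :
    Disjoint A (socleCompl P A) := by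
  have := isSemisimpleModule_socleIn P
  have := IsSemisimpleModule.of_injective _
    (inclusion_injective (inf_le_left.trans hA : A ⊓ socleCompl P A ≤ SocleIn R P))
  rw [disjoint_iff]
  refine (IsSemisimpleModule.eq_bot_or_exists_simple_le _).resolve_right fun ⟨T, hT, _⟩ => ?_
  have (S : {S | S ≤ P ∧ IsSimpleModule R S ∧ ¬ S ≤ A}) : IsSimpleModule R S := S.2.2.1
  obtain ⟨S, ⟨hSP, _, hSA⟩, ⟨e⟩⟩ := T.linearEquiv_of_le_sSup _ (hT.trans inf_le_right)
  exact hP.not_le_of_linearEquiv hSP ((hT.trans inf_le_left).trans (hA.trans (socleIn_le P)))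
    hSA e.symm (hT.trans inf_le_left)

theorem not_nonempty_linearEquiv_of_le_socleCompl (hP : IsSquareFree R P) (hA : A ≤ SocleIn R P)
    (hS : S ≤ socleCompl P A) (hT : T ≤ A) [IsSimpleModule R S] : ¬ Nonempty (S ≃ₗ[R] T) :=
  fun ⟨e⟩ => (isSimpleModule_iff_isAtom.1 ‹_›).ne_bot <| hP.eq_bot_of_le
    (hS.trans (socleCompl_le_socleIn.trans (socleIn_le P))) (hT.trans (hA.trans (socleIn_le P)))
    ((disjoint_socleCompl hP hA).symm.mono hS hT) e

/-- An endomorphism of `P` sends each simple summand `S` of `socleCompl P A` to `0` or to a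
copy of `S`, which square-freeness keeps out of `A`. -/
theorem isFullyInvariant_comap_socleCompl (hP : IsSquareFree R P) :
    ((socleCompl P A).comap P.subtype).IsFullyInvariant := by
  intro f
  have hB : (socleCompl P A).comap P.subtype =
      ⨆ S ∈ {S | S ≤ P ∧ IsSimpleModule R S ∧ ¬ S ≤ A}, S.comap P.subtype := by
    apply map_injective_of_injective P.injective_subtype
    simp only [Submodule.map_iSup, map_comap_subtype]
    rw [inf_eq_right.2 (socleCompl_le_socleIn.trans (socleIn_le P)), socleCompl, sSup_eq_iSup]
    exact iSup_congr fun S => iSup_congr fun hS => (inf_eq_right.2 hS.1).symm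
  rw [← map_le_iff_le_comap]
  conv_lhs => rw [hB]
  simp only [Submodule.map_iSup]
  refine iSup₂_le fun S ⟨hSP, hS, hSA⟩ => ?_
  rw [← map_le_map_iff_of_injective P.injective_subtype, map_comap_subtype,
    inf_eq_right.2 (socleCompl_le_socleIn.trans (socleIn_le P)), ← map_comp]
  have : IsSimpleModule R (S.comap P.subtype) :=
    .congr (comapSubtypeEquivOfLe hSP)
  let g := (P.subtype ∘ₗ f) ∘ₗ (S.comap P.subtype).subtype
  conv_lhs => rw [← range_subtype (S.comap P.subtype), ← LinearMap.range_comp]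
  obtain hg | hg := g.injective_or_eq_zero
  · have : IsSimpleModule R (LinearMap.range g) := .congr (LinearEquiv.ofInjective g hg).symm
    have hgP : LinearMap.range g ≤ P := by rintro _ ⟨x, rfl⟩; exact (f x).2
    exact le_sSup ⟨hgP, this, hP.not_le_of_linearEquiv hSP hgP hSA
      ((comapSubtypeEquivOfLe hSP).symm.trans (LinearEquiv.ofInjective g hg))⟩
  · simp [g, hg]

end Socle

theorem isQuasiProj_quotient {R : Type*} [Ring R] {P : Type*} [AddCommGroup P] [Module R P]
    [Module.Projective R P] {K : Submodule R P} (hK : K.IsFullyInvariant) :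
    IsQuasiProj R (P ⧸ K) := by
  intro N f
  obtain ⟨h, hh⟩ := Module.projective_lifting_property (N.mkQ ∘ₗ K.mkQ) (f ∘ₗ K.mkQ)
    (N.mkQ_surjective.comp K.mkQ_surjective)
  refine ⟨K.mapQ K h (hK h), ?_⟩
  ext x
  simpa using LinearMap.congr_fun hh x

theorem projective_rtIdeal {R : Type u} [Ring R] {e : R} (he : IsIdempotentElem e) :
    Module.Projective Rᵐᵒᵖ (RtIdeal R e) := by
  refine .of_split ((MulOpposite.opLinearEquiv Rᵐᵒᵖ).toLinearMap ∘ₗ (RtIdeal R e).subtype)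
    (LinearMap.toSpanSingleton Rᵐᵒᵖ (RtIdeal R e) ⟨e, Submodule.mem_span_singleton_self e⟩) ?_
  ext ⟨x, hx⟩
  obtain ⟨a, rfl⟩ := Submodule.mem_span_singleton.1 hx
  show MulOpposite.op (a • e) • e = a • e
  simp [← mul_assoc, he.eq]

theorem stmt_8_general (R : Type u) [Ring R] (hRAI : IsRAIType R)
    (e : R) (he : IsIdempotentElem e)
    (heInd : IsIndecomposableMod Rᵐᵒᵖ ↥(RtIdeal R e))
    (A : Submodule Rᵐᵒᵖ R) (hA : A ≤ SocleIn Rᵐᵒᵖ (RtIdeal R e)) :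
    ∃ A' : Submodule Rᵐᵒᵖ R,
      Disjoint A A' ∧ A ⊔ A' = SocleIn Rᵐᵒᵖ (RtIdeal R e) ∧
      (∀ S T : Submodule Rᵐᵒᵖ R, S ≤ A' → T ≤ A → IsSimpleModule Rᵐᵒᵖ ↥S →
        IsSimpleModule Rᵐᵒᵖ ↥T → ¬ Nonempty (↥S ≃ₗ[Rᵐᵒᵖ] ↥T)) ∧
      IsQuasiProj Rᵐᵒᵖ (↥(RtIdeal R e) ⧸ Submodule.comap (RtIdeal R e).subtype A') := by
  have hsq : IsSquareFree Rᵐᵒᵖ (RtIdeal R e) :=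
    (hRAI _ (Module.Finite.iff_fg.2 (Submodule.fg_span_singleton e)) heInd).isSquareFree heInd
  have := projective_rtIdeal he
  exact ⟨socleCompl (RtIdeal R e) A, disjoint_socleCompl hsq hA, sup_socleCompl hA,
    fun S T hS hT _ _ => not_nonempty_linearEquiv_of_le_socleCompl hsq hA hS hT,
    isQuasiProj_quotient (isFullyInvariant_comap_socleCompl hsq)⟩

/-- Over a right artinian ring of RAI-type, if `e` is an indecomposable idempotent
with `eR` not uniform and `A` is a right ideal contained in `Soc(eR)`, then
`Soc(eR) = A ⊕ A'` where `A'` has no simple submodule isomorphic to one of `A`, and `eR/A'`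
is quasi-projective. -/
theorem stmt_8 (R : Type u) [Ring R] [IsArtinian Rᵐᵒᵖ R] (hRAI : IsRAIType R)
    (e : R) (he : IsIdempotentElem e)
    (heInd : IsIndecomposableMod Rᵐᵒᵖ ↥(RtIdeal R e))
    (heNotUnif : ¬ IsUniformMod Rᵐᵒᵖ ↥(RtIdeal R e))
    (A : Submodule Rᵐᵒᵖ R) (hA : A ≤ SocleIn Rᵐᵒᵖ (RtIdeal R e)) :
    ∃ A' : Submodule Rᵐᵒᵖ R,
      Disjoint A A' ∧ A ⊔ A' = SocleIn Rᵐᵒᵖ (RtIdeal R e) ∧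
      (∀ S T : Submodule Rᵐᵒᵖ R, S ≤ A' → T ≤ A → IsSimpleModule Rᵐᵒᵖ ↥S →
        IsSimpleModule Rᵐᵒᵖ ↥T → ¬ Nonempty (↥S ≃ₗ[Rᵐᵒᵖ] ↥T)) ∧
      IsQuasiProj Rᵐᵒᵖ (↥(RtIdeal R e) ⧸ Submodule.comap (RtIdeal R e).subtype A') :=
  stmt_8_general R hRAI e he heInd A hA
end

section
/- Let F = ℤ/2ℤ and let R be the subring of the 3×3 matrix ring over F consisting of all matrices whose only possibly nonzero entries are in positions (1,1), (1,2), (1,3), (2,2), and (3,3). Then the right R-module e₁₁R (where e₁₁ is the matrix unit with 1 in position (1,1)) is indecomposable and automorphism-invariant, but not quasi-injective. In particular, there exists a finite-dimensional algebra over the field with two elements admitting an indecomposable automorphism-invariant right module that is not quasi-injective. -/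
universe u v w

/-- The ring of the example: all 3×3 matrices over `ℤ/2ℤ` whose only possibly nonzero entries
are in positions (0,0), (0,1), (0,2), (1,1) and (2,2) (zero-indexed), as a subalgebra of the
full matrix algebra. -/
def TriS : Subalgebra (ZMod 2) (Matrix (Fin 3) (Fin 3) (ZMod 2)) where
  carrier := {X | X 1 0 = 0 ∧ X 2 0 = 0 ∧ X 1 2 = 0 ∧ X 2 1 = 0}
  add_mem' := by
    rintro a b ⟨ha1, ha2, ha3, ha4⟩ ⟨hb1, hb2, hb3, hb4⟩
    refine ⟨?_, ?_, ?_, ?_⟩ <;> simp [Matrix.add_apply, *]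
  mul_mem' := by
    rintro a b ⟨ha1, ha2, ha3, ha4⟩ ⟨hb1, hb2, hb3, hb4⟩
    refine ⟨?_, ?_, ?_, ?_⟩ <;> simp [Matrix.mul_apply, Fin.sum_univ_three, *]
  algebraMap_mem' := by
    intro r
    refine ⟨?_, ?_, ?_, ?_⟩ <;>
      simp [Matrix.algebraMap_matrix_apply]
  zero_mem' := by simp [Matrix.zero_apply]
  one_mem' := by
    refine ⟨?_, ?_, ?_, ?_⟩ <;> simp [Matrix.one_apply]

/-- The idempotent `e₁₁` (matrix unit) as an element of `TriS`. -/
def e11 : ↥TriS :=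
  ⟨Matrix.single 0 0 1, by
    refine ⟨?_, ?_, ?_, ?_⟩ <;> simp [Matrix.single]⟩

/-- There is a finite-dimensional algebra over the field with two elements admitting an
indecomposable automorphism-invariant right module that is not quasi-injective. -/
structure FDTwoElementFieldCounterexample where
  A : Type
  [ringA : Ring A]
  [algA : Algebra (ZMod 2) A]
  fd : FiniteDimensional (ZMod 2) A
  M : Type
  [agM : AddCommGroup M]
  [modM : Module Aᵐᵒᵖ M]
  indec : IsIndecomposableMod Aᵐᵒᵖ M
  autinv : IsAutInv Aᵐᵒᵖ M
  notQI : ¬ IsQuasiInj Aᵐᵒᵖ M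


/-!
Write `M = e₁₁R`, the matrices supported on the first row (one-based indices here, zero-based in
the code). `M` is local, since anything with a nonzero `(1,1)` entry generates it; hence it is
indecomposable. Its injective hull is `E₂ ⊕ E₃`, where `Eₖ` is the two-dimensional `𝔽₂`-dual of
the column `R eₖₖ` (injective by Baer's criterion), and `M = gR` for the sum `g` of the two top
vectors. For an injective endomorphism `σ` of the hull, `σ g = (σ g) e₁₁` has no socle component
while `(σ g) e₁₂` and `(σ g) e₁₃` are nonzero; over `𝔽₂` this forces `σ g = g`, so `σ` fixes `M`.
Right multiplication by `e₂₂` on the socle `e₁₂𝔽₂ ⊕ e₁₃𝔽₂` fixes `e₁₂` and kills `e₁₃`; an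
extension to `M` would be left multiplication by `w = g(e₁₁)`, sending `e₁ₖ` to `w₁₁ e₁ₖ` for both
`k`, which is impossible.
-/

section InjectiveHull

variable {A : Type u} [Ring A] {M X Y : Type v} [AddCommGroup M] [Module A M]
  [AddCommGroup X] [Module A X] [AddCommGroup Y] [Module A Y]

theorem LinearMap.injective_of_isEssentialIn_range {j : M →ₗ[A] X}
    (hj : IsEssentialIn A (LinearMap.range j)) {f : X →ₗ[A] Y}
    (hfj : Function.Injective (f ∘ₗ j)) : Function.Injective f := by
  rw [← LinearMap.ker_eq_bot]
  by_contra hker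
  apply hj _ hker
  rw [eq_bot_iff]
  rintro _ ⟨⟨m, rfl⟩, hm⟩
  have : m = 0 := hfj (by simpa using hm)
  simp [this]

theorem IsInjHull.exists_linearEquiv {i₀ : M →ₗ[A] X} {i : M →ₗ[A] Y}
    (h₀ : IsInjHull A M X i₀) (h : IsInjHull A M Y i) :
    ∃ e : X ≃ₗ[A] Y, ∀ m, e (i₀ m) = i m := by
  obtain ⟨φ, hφ⟩ := h.2.1.out i₀ h₀.1 i
  have hφ_inj : Function.Injective φ :=
    LinearMap.injective_of_isEssentialIn_range h₀.2.2 (by convert h.1; ext; exact hφ _)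
  obtain ⟨ψ, hψ⟩ := h₀.2.1.out φ hφ_inj LinearMap.id
  have hψ_inj : Function.Injective ψ :=
    LinearMap.injective_of_isEssentialIn_range h.2.2
      (by convert h₀.1; ext m; simp [← hφ, hψ])
  have hφ_surj : Function.Surjective φ := fun y => ⟨ψ y, hψ_inj (hψ (ψ y))⟩
  exact ⟨LinearEquiv.ofBijective φ ⟨hφ_inj, hφ_surj⟩, hφ⟩

theorem IsAutInv.of_isInjHull {i₀ : M →ₗ[A] X} (h₀ : IsInjHull A M X i₀)
    (hσ : ∀ σ : X ≃ₗ[A] X, (LinearMap.range i₀).map (σ : X →ₗ[A] X) ≤ LinearMap.range i₀) :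
    IsAutInv A M := by
  intro E _ _ i h σ
  obtain ⟨e, he⟩ := h₀.exists_linearEquiv h
  rintro _ ⟨_, ⟨m, rfl⟩, rfl⟩
  obtain ⟨m', hm'⟩ := hσ ((e.trans σ).trans e.symm) ⟨i₀ m, ⟨m, rfl⟩, rfl⟩
  refine ⟨m', ?_⟩
  simpa [← he, e.symm_apply_eq] using congrArg e hm'

end InjectiveHull

theorem ZMod.eq_zero_or_eq_one_of_two (a : ZMod 2) : a = 0 ∨ a = 1 := by
  revert a; decide

namespace TriS

open MulOpposite

theorem entry_one_zero (x : TriS) : x.1 1 0 = 0 := x.2.1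
theorem entry_two_zero (x : TriS) : x.1 2 0 = 0 := x.2.2.1
theorem entry_one_two (x : TriS) : x.1 1 2 = 0 := x.2.2.2.1
theorem entry_two_one (x : TriS) : x.1 2 1 = 0 := x.2.2.2.2

theorem ext_entries {x y : TriS} (h₀ : x.1 0 0 = y.1 0 0)
    (h₁ : ∀ c : Fin 2, x.1 0 c.succ = y.1 0 c.succ)
    (h₂ : ∀ c : Fin 2, x.1 c.succ c.succ = y.1 c.succ c.succ) : x = y := by
  have := h₁ 0; have := h₁ 1; have := h₂ 0; have := h₂ 1
  ext i j
  fin_cases i <;> fin_cases j <;>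
    simp_all [entry_one_zero, entry_two_zero, entry_one_two, entry_two_one]

theorem mul_entry_zero_zero (x y : TriS) : (x * y).1 0 0 = x.1 0 0 * y.1 0 0 := by
  simp [Matrix.mul_apply, Fin.sum_univ_three, entry_one_zero, entry_two_zero]

theorem mul_entry_zero_succ (x y : TriS) (c : Fin 2) :
    (x * y).1 0 c.succ = x.1 0 0 * y.1 0 c.succ + x.1 0 c.succ * y.1 c.succ c.succ := by
  fin_cases c <;> simp [Matrix.mul_apply, Fin.sum_univ_three, entry_one_two, entry_two_one]

theorem mul_entry_succ_succ (x y : TriS) (c : Fin 2) :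
    (x * y).1 c.succ c.succ = x.1 c.succ c.succ * y.1 c.succ c.succ := by
  fin_cases c <;> simp [Matrix.mul_apply, Fin.sum_univ_three, entry_one_zero, entry_two_zero,
    entry_one_two, entry_two_one]

def rowUnit (c : Fin 2) : TriS :=
  ⟨Matrix.single 0 c.succ 1, by fin_cases c <;> simp [TriS, Matrix.single]⟩

def diagUnit (c : Fin 2) : TriS :=
  ⟨Matrix.single c.succ c.succ 1, by fin_cases c <;> simp [TriS, Matrix.single]⟩

@[simp] theorem e11_entry_zero_zero : e11.1 0 0 = 1 := rfl
@[simp] theorem e11_entry_zero_succ (c : Fin 2) : e11.1 0 c.succ = 0 := by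
  simp [e11, Matrix.single, (Fin.succ_ne_zero c).symm]
@[simp] theorem e11_entry_succ_succ (c : Fin 2) : e11.1 c.succ c.succ = 0 := by
  simp [e11, Matrix.single, (Fin.succ_ne_zero c).symm]

@[simp] theorem rowUnit_entry_zero_zero (c : Fin 2) : (rowUnit c).1 0 0 = 0 := by
  simp [rowUnit, Matrix.single]
@[simp] theorem rowUnit_entry_zero_succ (c d : Fin 2) :
    (rowUnit c).1 0 d.succ = if d = c then 1 else 0 := by
  simp [rowUnit, Matrix.single, eq_comm]
@[simp] theorem rowUnit_entry_succ_succ (c d : Fin 2) : (rowUnit c).1 d.succ d.succ = 0 := by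
  simp [rowUnit, Matrix.single, (Fin.succ_ne_zero d).symm]

@[simp] theorem diagUnit_entry_zero_zero (c : Fin 2) : (diagUnit c).1 0 0 = 0 := by
  simp [diagUnit, Matrix.single]
@[simp] theorem diagUnit_entry_zero_succ (c d : Fin 2) : (diagUnit c).1 0 d.succ = 0 := by
  simp [diagUnit, Matrix.single]
@[simp] theorem diagUnit_entry_succ_succ (c d : Fin 2) :
    (diagUnit c).1 d.succ d.succ = if d = c then 1 else 0 := by
  simp [diagUnit, Matrix.single, eq_comm]

theorem mul_rowUnit (x : TriS) (c : Fin 2) : x * rowUnit c = x.1 0 0 • rowUnit c := by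
  ext i j
  fin_cases c <;> fin_cases i <;> fin_cases j <;>
    simp [rowUnit, Matrix.mul_apply, Matrix.single, entry_one_zero,
      entry_two_zero]

theorem mul_diagUnit (x : TriS) (c : Fin 2) :
    x * diagUnit c = x.1 0 c.succ • rowUnit c + x.1 c.succ c.succ • diagUnit c := by
  ext i j
  fin_cases c <;> fin_cases i <;> fin_cases j <;>
    simp [rowUnit, diagUnit, Matrix.mul_apply, Matrix.single,
      entry_one_two, entry_two_one]

theorem mem_rtIdeal_e11 {x : TriS} :
    x ∈ RtIdeal TriS e11 ↔ ∀ c : Fin 2, x.1 c.succ c.succ = 0 := by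
  rw [RtIdeal, Submodule.mem_span_singleton]
  constructor
  · rintro ⟨a, rfl⟩ c
    simp [MulOpposite.smul_eq_mul_unop, mul_entry_succ_succ]
  · intro hx
    refine ⟨op x, ext_entries ?_ (fun c => ?_) (fun c => ?_)⟩ <;>
      simp [MulOpposite.smul_eq_mul_unop, mul_entry_zero_zero, mul_entry_zero_succ,
        mul_entry_succ_succ, hx]

end TriS

open MulOpposite TriS

/-- The injective hull of the simple module `e_{c+1,c+1}R`: the `𝔽₂`-dual of the column
`R e_{c+1,c+1}`, a vector `(p, q)` recording the values on `e_{0,c+1}` and `e_{c+1,c+1}`. -/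
def Col (_c : Fin 2) : Type := ZMod 2 × ZMod 2

namespace Col

variable {c : Fin 2}

instance : AddCommGroup (Col c) := inferInstanceAs (AddCommGroup (ZMod 2 × ZMod 2))

instance : SMul TriSᵐᵒᵖ (Col c) where
  smul r v := (v.1 * r.unop.1 0 0, v.1 * r.unop.1 0 c.succ + v.2 * r.unop.1 c.succ c.succ)

def mk (p q : ZMod 2) : Col c := (p, q)

@[simp] theorem mk_fst (p q : ZMod 2) : (mk p q : Col c).1 = p := rfl
@[simp] theorem mk_snd (p q : ZMod 2) : (mk p q : Col c).2 = q := rfl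

@[ext] theorem ext {v w : Col c} (h₁ : v.1 = w.1) (h₂ : v.2 = w.2) : v = w := Prod.ext h₁ h₂

@[simp] theorem add_fst (v w : Col c) : (v + w).1 = v.1 + w.1 := rfl
@[simp] theorem add_snd (v w : Col c) : (v + w).2 = v.2 + w.2 := rfl
@[simp] theorem zero_fst : (0 : Col c).1 = 0 := rfl
@[simp] theorem zero_snd : (0 : Col c).2 = 0 := rfl
@[simp] theorem smul_fst (r : TriSᵐᵒᵖ) (v : Col c) : (r • v).1 = v.1 * r.unop.1 0 0 := rfl
@[simp] theorem smul_snd (r : TriSᵐᵒᵖ) (v : Col c) :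
    (r • v).2 = v.1 * r.unop.1 0 c.succ + v.2 * r.unop.1 c.succ c.succ := rfl

instance : Module TriSᵐᵒᵖ (Col c) where
  one_smul v := by ext <;> simp [Matrix.one_apply_ne (Fin.succ_ne_zero c).symm]
  mul_smul r s v := by
    ext <;> simp [mul_entry_zero_zero, mul_entry_zero_succ, mul_entry_succ_succ] <;> ring
  smul_zero r := by ext <;> simp
  smul_add r v w := by ext <;> simp <;> ring
  add_smul r s v := by ext <;> simp <;> ring
  zero_smul v := by ext <;> simp

/- Baer's criterion reduces to extending the `𝔽₂`-linear functional `x ↦ (g x).2` from `I` to the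
whole ring: both coordinates of `g x` are recovered from it by multiplying `x` with `e_{0,c+1}`
and `e_{c+1,c+1}`. -/
theorem baer (c : Fin 2) : Module.Baer TriSᵐᵒᵖ (Col c) := by
  intro I g
  let φ : I →ₗ[ZMod 2] ZMod 2 :=
    (AddMonoidHom.snd (ZMod 2) (ZMod 2)).comp (g : I →+ Col c) |>.toZModLinearMap 2
  obtain ⟨Φ, hΦ⟩ := IsSemisimpleModule.extension_property
    (I.subtype.restrictScalars (ZMod 2)) Subtype.val_injective φ
  refine ⟨LinearMap.toSpanSingleton _ _ (mk (Φ (op (rowUnit c))) (Φ (op (diagUnit c)))),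
    fun x hx => ?_⟩
  have key (r : TriS) : Φ (op r * x) = (op r • g ⟨x, hx⟩).2 := by
    rw [← map_smul]
    exact LinearMap.congr_fun hΦ ⟨op r * x, I.mul_mem_left _ hx⟩
  have hrow : op (rowUnit c) * x = x.unop.1 0 0 • op (rowUnit c) := by
    rw [← op_unop x, ← op_mul, mul_rowUnit, op_smul, unop_op]
  have hdiag : op (diagUnit c) * x =
      x.unop.1 0 c.succ • op (rowUnit c) + x.unop.1 c.succ c.succ • op (diagUnit c) := by
    rw [← op_unop x, ← op_mul, mul_diagUnit, op_add, op_smul, op_smul, unop_op]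
  have h₁ := key (rowUnit c)
  have h₂ := key (diagUnit c)
  rw [hrow, map_smul] at h₁
  rw [hdiag, map_add, map_smul, map_smul] at h₂
  rw [LinearMap.toSpanSingleton_apply]
  ext
  · simpa [mul_comm] using h₁
  · simpa [mul_comm] using h₂

end Col

instance (c : Fin 2) : Module.Injective TriSᵐᵒᵖ (Col c) := (Col.baer c).injective

abbrev Hull : Type := ∀ c : Fin 2, Col c

def hullGen : Hull := fun _ => Col.mk 1 0

def socleVec (c : Fin 2) : Hull := op (rowUnit c) • hullGen

theorem socleVec_ne_zero (c : Fin 2) : socleVec c ≠ 0 := by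
  intro h
  simpa [socleVec, hullGen] using congrArg (fun v : Hull => (v c).2) h

theorem rowUnit_smul_eq_socleVec {k : Hull} {c : Fin 2} (hk : (k c).1 = 1) :
    op (rowUnit c) • k = socleVec c := by
  funext d
  ext
  · simp [socleVec]
  · by_cases hd : d = c
    · subst hd; simp [socleVec, hullGen, hk]
    · simp [socleVec, hd]

theorem diagUnit_smul_eq_socleVec {k : Hull} {c : Fin 2} (hk : (k c).2 = 1) :
    op (diagUnit c) • k = socleVec c := by
  funext d
  ext
  · simp [socleVec]
  · by_cases hd : d = c
    · subst hd; simp [socleVec, hullGen, hk]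
    · simp [socleVec, hd]

theorem e11_smul_hullGen : op e11 • hullGen = hullGen := by
  funext c
  ext <;> simp [hullGen]

theorem LinearMap.apply_hullGen_of_injective {σ : Hull →ₗ[TriSᵐᵒᵖ] Hull}
    (hσ : Function.Injective σ) : σ hullGen = hullGen := by
  have hsnd : op e11 • σ hullGen = σ hullGen := by rw [← map_smul, e11_smul_hullGen]
  have hsoc (c : Fin 2) : op (rowUnit c) • σ hullGen ≠ 0 := by
    rw [← map_smul, ← socleVec, ← map_zero σ]
    exact hσ.ne (socleVec_ne_zero c)
  funext c
  ext
  · refine (ZMod.eq_zero_or_eq_one_of_two _).resolve_left fun h => hsoc c ?_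
    funext d
    ext
    · simp
    · by_cases hd : d = c
      · subst hd; simpa [hullGen] using h
      · simp [hd]
  · simpa [hullGen] using (congrArg (fun v : Hull => (v c).2) hsnd).symm

def hullEmbedding : RtIdeal TriS e11 →ₗ[TriSᵐᵒᵖ] Hull where
  toFun m := op (m : TriS) • hullGen
  map_add' m m' := by simp [add_smul]
  map_smul' r m := by simp [MulOpposite.smul_eq_mul_unop, mul_smul]

theorem hullEmbedding_injective : Function.Injective hullEmbedding := by
  intro m m' h
  have h₀ := congrArg (fun v : Hull => (v 0).1) h
  have h₁ (c : Fin 2) := congrArg (fun v : Hull => (v c).2) h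
  refine Subtype.ext (ext_entries ?_ (fun c => ?_) (fun c => ?_))
  · simpa [hullEmbedding, hullGen] using h₀
  · simpa [hullEmbedding, hullGen] using h₁ c
  · rw [mem_rtIdeal_e11.1 m.2, mem_rtIdeal_e11.1 m'.2]

theorem isEssentialIn_range_hullEmbedding :
    IsEssentialIn TriSᵐᵒᵖ (LinearMap.range hullEmbedding) := by
  intro K hK
  obtain ⟨k, hkK, hk⟩ := Submodule.exists_mem_ne_zero_of_ne_bot hK
  have hsoc (c : Fin 2) : socleVec c ∈ LinearMap.range hullEmbedding :=
    ⟨⟨rowUnit c, mem_rtIdeal_e11.2 fun d => by simp⟩, rfl⟩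
  obtain ⟨c, hc⟩ : ∃ c, (k c).1 = 1 ∨ (k c).2 = 1 := by
    by_contra! h
    refine hk (funext fun c => Col.ext ?_ ?_)
    · exact (ZMod.eq_zero_or_eq_one_of_two _).resolve_right (h c).1
    · exact (ZMod.eq_zero_or_eq_one_of_two _).resolve_right (h c).2
  rw [Submodule.ne_bot_iff]
  refine ⟨socleVec c, ⟨hsoc c, ?_⟩, socleVec_ne_zero c⟩
  rcases hc with hc | hc
  · exact rowUnit_smul_eq_socleVec hc ▸ K.smul_mem _ hkK
  · exact diagUnit_smul_eq_socleVec hc ▸ K.smul_mem _ hkK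

theorem isInjHull_hullEmbedding : IsInjHull TriSᵐᵒᵖ (RtIdeal TriS e11) Hull hullEmbedding :=
  ⟨hullEmbedding_injective, inferInstance, isEssentialIn_range_hullEmbedding⟩

theorem isAutInv_rtIdeal_e11 : IsAutInv TriSᵐᵒᵖ (RtIdeal TriS e11) := by
  refine IsAutInv.of_isInjHull isInjHull_hullEmbedding fun σ => ?_
  rintro _ ⟨_, ⟨m, rfl⟩, rfl⟩
  refine ⟨m, ?_⟩
  simp [hullEmbedding, LinearMap.apply_hullGen_of_injective σ.injective]

def e11Gen : RtIdeal TriS e11 := ⟨e11, Submodule.mem_span_singleton_self e11⟩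

theorem e11Gen_ne_zero : e11Gen ≠ 0 := fun h => by
  simpa [e11Gen] using congrArg (fun m : RtIdeal TriS e11 => (m : TriS).1 0 0) h

theorem eq_top_of_entry_zero_zero_eq_one {N : Submodule TriSᵐᵒᵖ (RtIdeal TriS e11)}
    {m : RtIdeal TriS e11} (hm : m ∈ N) (h : (m : TriS).1 0 0 = 1) : N = ⊤ := by
  have he : op e11 • m = e11Gen := by
    apply Subtype.ext
    rw [Submodule.coe_smul, MulOpposite.smul_eq_mul_unop, unop_op]
    exact ext_entries (by simp [mul_entry_zero_zero, h, e11Gen])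
      (fun c => by simp [mul_entry_zero_succ, e11Gen])
      (fun c => by simp [mul_entry_succ_succ, e11Gen])
  rw [eq_top_iff]
  rintro ⟨x, hx⟩ -
  obtain ⟨a, rfl⟩ := Submodule.mem_span_singleton.1 hx
  have : (⟨a • e11, hx⟩ : RtIdeal TriS e11) = a • e11Gen := rfl
  exact this ▸ N.smul_mem a (he ▸ N.smul_mem _ hm)

theorem isIndecomposableMod_rtIdeal_e11 : IsIndecomposableMod TriSᵐᵒᵖ (RtIdeal TriS e11) := by
  refine ⟨⟨e11Gen, 0, e11Gen_ne_zero⟩, fun N₁ N₂ h => ?_⟩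
  obtain ⟨x, hx, y, hy, hxy⟩ :=
    Submodule.mem_sup.1 (h.codisjoint.eq_top ▸ Submodule.mem_top : e11Gen ∈ N₁ ⊔ N₂)
  have hsum : (x : TriS).1 0 0 + (y : TriS).1 0 0 = 1 := by
    simpa [e11Gen] using congrArg (fun m : RtIdeal TriS e11 => (m : TriS).1 0 0) hxy
  rcases ZMod.eq_zero_or_eq_one_of_two ((x : TriS).1 0 0) with hx0 | hx0
  · have hN₂ := eq_top_of_entry_zero_zero_eq_one hy (by simpa [hx0] using hsum)
    exact Or.inl (disjoint_top.1 (hN₂ ▸ h.disjoint))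
  · have hN₁ := eq_top_of_entry_zero_zero_eq_one hx hx0
    exact Or.inr (top_disjoint.1 (hN₁ ▸ h.disjoint))

def rtIdealSocle : Submodule TriSᵐᵒᵖ (RtIdeal TriS e11) where
  carrier := {m | (m : TriS).1 0 0 = 0}
  add_mem' hm hm' := by simp_all
  zero_mem' := rfl
  smul_mem' r m hm := by simp_all [MulOpposite.smul_eq_mul_unop, mul_entry_zero_zero]

def rtIdealSocleMulDiagUnit : rtIdealSocle →ₗ[TriSᵐᵒᵖ] RtIdeal TriS e11 where
  toFun n := (op (diagUnit 0) : TriSᵐᵒᵖ) • (n : RtIdeal TriS e11)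
  map_add' n n' := by rw [Submodule.coe_add, smul_add]
  map_smul' r n := by
    have hn : (n : TriS).1 0 0 = 0 := n.2
    apply Subtype.ext
    simp only [SetLike.val_smul, MulOpposite.smul_eq_mul_unop, unop_op,
      RingHom.id_apply]
    refine ext_entries ?_ (fun c => ?_) (fun c => ?_) <;>
      simp [mul_entry_zero_zero, mul_entry_zero_succ, mul_entry_succ_succ, hn]

theorem not_isQuasiInj_rtIdeal_e11 : ¬ IsQuasiInj TriSᵐᵒᵖ (RtIdeal TriS e11) := by
  intro hQI
  obtain ⟨g, hg⟩ := hQI rtIdealSocle rtIdealSocleMulDiagUnit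
  have key (c : Fin 2) : (g e11Gen : TriS).1 0 0 = if c = 0 then 1 else 0 := by
    have hc := hg ⟨(op (rowUnit c) : TriSᵐᵒᵖ) • e11Gen, by
      change ((op (rowUnit c) : TriSᵐᵒᵖ) • e11Gen : TriS).1 0 0 = 0
      simp [MulOpposite.smul_eq_mul_unop, mul_entry_zero_zero]⟩
    rw [map_smul] at hc
    have := congrArg (fun m : RtIdeal TriS e11 => (m : TriS).1 0 c.succ) hc
    simp only [rtIdealSocleMulDiagUnit, LinearMap.coe_mk, AddHom.coe_mk, Submodule.coe_smul,
      MulOpposite.smul_eq_mul_unop, unop_op, mul_entry_zero_succ] at this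
    simpa [e11Gen] using this
  simpa using (key 0).symm.trans (key 1)

/-- For the ring `R = TriS` of upper-left-row matrices over `𝔽₂`, the right
`R`-module `e₁₁R` is indecomposable and automorphism-invariant but not quasi-injective. In
particular, there exists a finite-dimensional algebra over the field with two elements with an
indecomposable automorphism-invariant right module that is not quasi-injective. -/
theorem stmt_19 :
    (IsIndecomposableMod (↥TriS)ᵐᵒᵖ ↥(RtIdeal (↥TriS) e11) ∧
      IsAutInv (↥TriS)ᵐᵒᵖ ↥(RtIdeal (↥TriS) e11) ∧
      ¬ IsQuasiInj (↥TriS)ᵐᵒᵖ ↥(RtIdeal (↥TriS) e11)) ∧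
    Nonempty FDTwoElementFieldCounterexample := by
  refine ⟨⟨isIndecomposableMod_rtIdeal_e11, isAutInv_rtIdeal_e11, not_isQuasiInj_rtIdeal_e11⟩,
    ⟨{ A := TriS
       fd := inferInstance
       M := RtIdeal TriS e11
       indec := isIndecomposableMod_rtIdeal_e11
       autinv := isAutInv_rtIdeal_e11
       notQI := not_isQuasiInj_rtIdeal_e11 }⟩⟩
end
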